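/- arXiv:1611.09029 — 2 statements merged into one kernel-verified Lean document; each statement's English description precedes it below -/
import Mathlib

section
/- (Real Stone theorem) Let U : ℝ → B(H) be a strongly continuous one-parameter group of unitary operators on a real Hilbert space H. Then the operator A with domain D(A) = {x ∈ H : lim_{h→0} h⁻¹(U_h x − x) exists} and Ax := lim_{h→0} h⁻¹(U_h x − x) is densely defined, anti-selfadjoint (A* = −A), satisfies A U_t = U_t A for all t, and U_t = e^{t A_C}|_H; moreover A is the unique anti-selfadjoint operator with this last property. -/
/-!
The generator `A` is the derivative at `0` of the orbits `t ↦ U t x`. The averages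
`t⁻¹ ∫₀ᵗ U s x` lie in its domain and tend to `x`, so `A` is densely defined, and differentiating
`⟪U t x, U t y⟫ = ⟪x, y⟫` shows `-A ⊆ A*`. Conversely, for `y ∈ D(A*)` and `x ∈ D(A)` the function
`t ↦ ⟪x, U t y⟫` has derivative `-⟪x, U t A* y⟫`; testing against the dense domain gives
`U t y = y - ∫₀ᵗ U s A* y ds`, so the orbit of `y` is differentiable and `A* ⊆ -A`.
Anti-selfadjoint operators are maximal among skew ones: `A' ⊆ A` gives `-A = A* ⊆ A'* = -A'`.
-/

open Filter

def IsAntiSelfAdjointPMap {𝕜 E : Type*} [RCLike 𝕜] [NormedAddCommGroup E]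
    [InnerProductSpace 𝕜 E] [CompleteSpace E] (A : E →ₗ.[𝕜] E) : Prop :=
  A.adjoint.domain = A.domain ∧
    ∀ (x : E) (hx : x ∈ A.domain) (hx' : x ∈ A.adjoint.domain),
      A.adjoint ⟨x, hx'⟩ = -A ⟨x, hx⟩

open Topology

namespace LinearPMap

theorem neg_le_neg {R E F : Type*} [Ring R] [AddCommGroup E] [Module R E] [AddCommGroup F]
    [Module R F] {S T : E →ₗ.[R] F} (h : S ≤ T) : -S ≤ -T :=
  ⟨h.1, fun _ _ hxy => congrArg Neg.neg (h.2 hxy)⟩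

variable {𝕜 E F : Type*} [RCLike 𝕜] [NormedAddCommGroup E] [InnerProductSpace 𝕜 E]
  [NormedAddCommGroup F] [InnerProductSpace 𝕜 F] [CompleteSpace E]

theorem adjoint_anti {S T : E →ₗ.[𝕜] F} (hS : Dense (S.domain : Set E)) (h : S ≤ T) :
    T.adjoint ≤ S.adjoint := by
  refine IsFormalAdjoint.le_adjoint hS fun x y => ?_
  rw [apply_comp_inclusion h x]
  exact (adjoint_isFormalAdjoint (hS.mono h.1)).symm _ y

theorem _root_.isAntiSelfAdjointPMap_iff {A : E →ₗ.[𝕜] E} :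
    IsAntiSelfAdjointPMap A ↔ A.adjoint = -A := by
  refine ⟨fun ⟨hdom, hval⟩ => ext_iff.2 ⟨hdom, fun x hx' hx => hval x hx hx'⟩, fun h => ?_⟩
  obtain ⟨hdom, hval⟩ := ext_iff.1 h
  exact ⟨hdom, fun x hx hx' => @hval x hx' hx⟩

theorem eq_of_le_of_adjoint_eq_neg {S T : E →ₗ.[𝕜] E} (hS : Dense (S.domain : Set E))
    (h : S ≤ T) (hS' : S.adjoint = -S) (hT' : T.adjoint = -T) : S = T := by
  have h' : -T ≤ -S := hT' ▸ hS' ▸ adjoint_anti hS h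
  exact le_antisymm h (by simpa only [neg_neg] using neg_le_neg h')

end LinearPMap

section Generator

variable {E : Type*} [NormedAddCommGroup E] [NormedSpace ℝ E] (U : ℝ → E →L[ℝ] E)

noncomputable def infinitesimalGenerator : E →ₗ.[ℝ] E where
  domain :=
    { carrier := {x | DifferentiableAt ℝ (fun t => U t x) 0}
      add_mem' := fun hx hy => by simpa only [Set.mem_ofPred_eq, map_add] using hx.fun_add hy
      zero_mem' := by simpa only [Set.mem_ofPred_eq, map_zero] using differentiableAt_const 0
      smul_mem' := fun c _ hx => by
        simpa only [Set.mem_ofPred_eq, map_smul] using hx.fun_const_smul c }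
  toFun :=
    { toFun := fun x => deriv (fun t => U t x) 0
      map_add' := fun x y => by simpa only [Submodule.coe_add, map_add] using deriv_fun_add x.2 y.2
      map_smul' := fun c x => by
        simpa only [SetLike.val_smul, map_smul, RingHom.id_apply] using deriv_fun_const_smul c x.2 }

theorem hasDerivAt_infinitesimalGenerator (x : (infinitesimalGenerator U).domain) :
    HasDerivAt (fun t => U t x) (infinitesimalGenerator U x) 0 :=
  x.2.hasDerivAt

theorem exists_infinitesimalGenerator_apply_eq {x y : E}
    (h : HasDerivAt (fun t => U t x) y 0) :
    ∃ hx : x ∈ (infinitesimalGenerator U).domain, infinitesimalGenerator U ⟨x, hx⟩ = y :=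
  ⟨h.differentiableAt, h.deriv⟩

theorem le_infinitesimalGenerator (A : E →ₗ.[ℝ] E)
    (h : ∀ x : A.domain, HasDerivAt (fun t => U t x) (A x) 0) : A ≤ infinitesimalGenerator U :=
  ⟨fun x hx => (h ⟨x, hx⟩).differentiableAt, fun x y hxy => by
    change A x = deriv (fun t => U t (y : E)) 0
    rw [← hxy, (h x).deriv]⟩

end Generator

section Orbits

variable {E : Type*} [NormedAddCommGroup E] [NormedSpace ℝ E] {U : ℝ → E →L[ℝ] E}

theorem hasDerivAt_orbit_zero_iff (hU0 : U 0 = 1) {x y : E} :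
    HasDerivAt (fun t => U t x) y 0 ↔
      Tendsto (fun h : ℝ => h⁻¹ • (U h x - x)) (𝓝[≠] 0) (𝓝 y) := by
  simp only [hasDerivAt_iff_tendsto_slope_zero, zero_add, hU0, one_apply_eq_self]

theorem apply_apply_eq_apply_add (hUadd : ∀ t s : ℝ, U (t + s) = U t * U s) (t s : ℝ) (x : E) :
    U t (U s x) = U (t + s) x := by
  rw [hUadd, mul_apply_eq_comp]

theorem hasDerivAt_orbit_map (hUadd : ∀ t s : ℝ, U (t + s) = U t * U s)
    (x : (infinitesimalGenerator U).domain) (t : ℝ) :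
    HasDerivAt (fun s => U s (U t x)) (U t (infinitesimalGenerator U x)) 0 := by
  have hcomm : (fun s => U s (U t x)) = fun s => U t (U s x) := by
    ext s
    rw [apply_apply_eq_apply_add hUadd, apply_apply_eq_apply_add hUadd, add_comm]
  rw [hcomm]
  exact (U t).hasFDerivAt.comp_hasDerivAt 0 (hasDerivAt_infinitesimalGenerator U x)

theorem hasDerivAt_orbit (hUadd : ∀ t s : ℝ, U (t + s) = U t * U s)
    (x : (infinitesimalGenerator U).domain) (t : ℝ) :
    HasDerivAt (fun s => U s x) (U t (infinitesimalGenerator U x)) t := by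
  have hshift : (fun s => U s x) = fun s => U (s - t) (U t x) := by
    ext s
    rw [apply_apply_eq_apply_add hUadd, sub_add_cancel]
  rw [hshift]
  exact HasDerivAt.comp_sub_const t t
    (by simpa only [sub_self] using hasDerivAt_orbit_map hUadd x t)

variable [CompleteSpace E]

theorem hasDerivAt_orbit_integral (hUadd : ∀ t s : ℝ, U (t + s) = U t * U s)
    (hUcont : ∀ x : E, Continuous fun t : ℝ => U t x) (x : E) (t : ℝ) :
    HasDerivAt (fun s => U s (∫ r in (0 : ℝ)..t, U r x)) (U t x - U 0 x) 0 := by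
  set F : ℝ → E := fun u => ∫ r in (0 : ℝ)..u, U r x
  have hF : ∀ u, HasDerivAt F (U u x) u := fun u =>
    ((hUcont x).integral_hasStrictDerivAt 0 u).hasDerivAt
  have hint : ∀ a b : ℝ, IntervalIntegrable (fun r => U r x) MeasureTheory.volume a b :=
    fun a b => (hUcont x).intervalIntegrable a b
  have hshift : (fun s => U s (F t)) = fun s => F (s + t) - F s := by
    ext s
    calc U s (F t) = ∫ r in (0 : ℝ)..t, U (s + r) x := by
          simp only [F, ← (U s).intervalIntegral_comp_comm (hint 0 t),
            apply_apply_eq_apply_add hUadd]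
      _ = ∫ r in s..s + t, U r x := by
          rw [intervalIntegral.integral_comp_add_left (fun r => U r x), add_zero]
      _ = F (s + t) - F s :=
          (intervalIntegral.integral_interval_sub_left (hint 0 _) (hint 0 s)).symm
  rw [hshift]
  exact ((hF (0 + t)).comp_add_const 0 t).sub (hF 0) |>.congr_deriv (by rw [zero_add])

theorem dense_infinitesimalGenerator_domain (hU0 : U 0 = 1)
    (hUadd : ∀ t s : ℝ, U (t + s) = U t * U s)
    (hUcont : ∀ x : E, Continuous fun t : ℝ => U t x) :
    Dense ((infinitesimalGenerator U).domain : Set E) := by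
  intro x
  have hslope : Tendsto (fun t : ℝ => t⁻¹ • ∫ r in (0 : ℝ)..t, U r x) (𝓝[≠] 0) (𝓝 x) := by
    simpa only [hasDerivAt_iff_tendsto_slope_zero, zero_add, intervalIntegral.integral_same,
      sub_zero, hU0, one_apply_eq_self]
      using ((hUcont x).integral_hasStrictDerivAt 0 0).hasDerivAt
  refine mem_closure_of_tendsto hslope (Eventually.of_forall fun t => ?_)
  exact Submodule.smul_mem _ _ (hasDerivAt_orbit_integral hUadd hUcont x t).differentiableAt

end Orbits

section Unitary

open scoped RealInnerProductSpace

variable {H : Type*} [NormedAddCommGroup H] [InnerProductSpace ℝ H] {U : ℝ → H →L[ℝ] H}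

theorem inner_apply_eq_inner_apply_neg (hU0 : U 0 = 1) (hUadd : ∀ t s : ℝ, U (t + s) = U t * U s)
    (hUiso : ∀ (t : ℝ) (x : H), ‖U t x‖ = ‖x‖) (t : ℝ) (x y : H) :
    ⟪U t x, y⟫ = ⟪x, U (-t) y⟫ := by
  have hinv : U t (U (-t) y) = y := by
    rw [apply_apply_eq_apply_add hUadd, add_neg_cancel, hU0, one_apply_eq_self]
  conv_lhs => rw [← hinv]
  exact (LinearMap.norm_map_iff_inner_map_map (U t)).1 (hUiso t) x _

theorem isFormalAdjoint_neg_infinitesimalGenerator (hU0 : U 0 = 1)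
    (hUiso : ∀ (t : ℝ) (x : H), ‖U t x‖ = ‖x‖) :
    (infinitesimalGenerator U).IsFormalAdjoint (-infinitesimalGenerator U) := by
  intro x y
  have hderiv := (hasDerivAt_infinitesimalGenerator U x).inner ℝ
    (hasDerivAt_infinitesimalGenerator U y)
  have hconst : (fun t => ⟪U t x, U t y⟫) = fun _ => ⟪(x : H), y⟫ :=
    funext fun t => (LinearMap.norm_map_iff_inner_map_map (U t)).1 (hUiso t) x y
  rw [hconst, hU0] at hderiv
  simp only [one_apply_eq_self] at hderiv
  rw [LinearPMap.neg_apply, inner_neg_right, eq_neg_iff_add_eq_zero, add_comm]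
  exact (hasDerivAt_const 0 _).unique hderiv |>.symm

variable [CompleteSpace H]

theorem hasDerivAt_inner_orbit_of_mem_adjoint (hU0 : U 0 = 1)
    (hUadd : ∀ t s : ℝ, U (t + s) = U t * U s) (hUiso : ∀ (t : ℝ) (x : H), ‖U t x‖ = ‖x‖)
    (hUcont : ∀ x : H, Continuous fun t : ℝ => U t x)
    (x : (infinitesimalGenerator U).domain) (y : (infinitesimalGenerator U).adjoint.domain)
    (t : ℝ) :
    HasDerivAt (fun s => ⟪(x : H), U s y⟫)
      (-⟪(x : H), U t ((infinitesimalGenerator U).adjoint y)⟫) t := by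
  have hback : HasDerivAt (fun s => U (-s) x) ((-1 : ℝ) • U (-t) (infinitesimalGenerator U x)) t :=
    (hasDerivAt_orbit hUadd x (-t)).scomp t (hasDerivAt_neg t)
  obtain ⟨hmem, hcomm⟩ :=
    exists_infinitesimalGenerator_apply_eq U (hasDerivAt_orbit_map hUadd x (-t))
  have hval : ⟪U (-t) (infinitesimalGenerator U x), y⟫
      = ⟪(x : H), U t ((infinitesimalGenerator U).adjoint y)⟫ := by
    rw [← hcomm, real_inner_comm, ← LinearPMap.adjoint_isFormalAdjoint
      (dense_infinitesimalGenerator_domain hU0 hUadd hUcont) y ⟨_, hmem⟩,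
      real_inner_comm, inner_apply_eq_inner_apply_neg hU0 hUadd hUiso, neg_neg]
  have hfun : (fun s => ⟪(x : H), U s y⟫) = fun s => ⟪U (-s) x, y⟫ := by
    ext s
    rw [inner_apply_eq_inner_apply_neg hU0 hUadd hUiso, neg_neg]
  rw [hfun, ← hval]
  simpa only [inner_zero_right, zero_add, real_inner_smul_left, neg_one_mul]
    using hback.inner ℝ (hasDerivAt_const t (y : H))

theorem orbit_add_integral_eq_of_mem_adjoint (hU0 : U 0 = 1)
    (hUadd : ∀ t s : ℝ, U (t + s) = U t * U s) (hUiso : ∀ (t : ℝ) (x : H), ‖U t x‖ = ‖x‖)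
    (hUcont : ∀ x : H, Continuous fun t : ℝ => U t x)
    (y : (infinitesimalGenerator U).adjoint.domain) (t : ℝ) :
    U t y + ∫ s in (0 : ℝ)..t, U s ((infinitesimalGenerator U).adjoint y) = y := by
  set z := (infinitesimalGenerator U).adjoint y with hz
  refine (dense_infinitesimalGenerator_domain hU0 hUadd hUcont).eq_of_inner_right ℝ
    fun x hx => ?_
  set φ : ℝ → ℝ := fun s => ⟪x, U s y + ∫ r in (0 : ℝ)..s, U r z⟫
  have hφ : ∀ s, HasDerivAt φ 0 s := fun s => by
    simpa only [φ, inner_add_right, inner_zero_left, add_zero, ← hz, neg_add_cancel]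
      using (hasDerivAt_inner_orbit_of_mem_adjoint hU0 hUadd hUiso hUcont ⟨x, hx⟩ y s).fun_add
        ((hasDerivAt_const s x).inner ℝ ((hUcont z).integral_hasStrictDerivAt 0 s).hasDerivAt)
  have hconst := is_const_of_deriv_eq_zero (fun s => (hφ s).differentiableAt)
    (fun s => (hφ s).deriv) t 0
  simpa only [φ, hU0, one_apply_eq_self, intervalIntegral.integral_same, add_zero] using hconst

theorem hasDerivAt_orbit_of_mem_adjoint (hU0 : U 0 = 1)
    (hUadd : ∀ t s : ℝ, U (t + s) = U t * U s) (hUiso : ∀ (t : ℝ) (x : H), ‖U t x‖ = ‖x‖)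
    (hUcont : ∀ x : H, Continuous fun t : ℝ => U t x)
    (y : (infinitesimalGenerator U).adjoint.domain) :
    HasDerivAt (fun t => U t y) (-(infinitesimalGenerator U).adjoint y) 0 := by
  set z := (infinitesimalGenerator U).adjoint y
  have horbit : (fun t => U t y) = fun t => (y : H) - ∫ s in (0 : ℝ)..t, U s z := by
    ext t
    rw [eq_sub_iff_add_eq, orbit_add_integral_eq_of_mem_adjoint hU0 hUadd hUiso hUcont]
  rw [horbit]
  simpa only [zero_sub, hU0, one_apply_eq_self]
    using (hasDerivAt_const 0 (y : H)).fun_sub ((hUcont z).integral_hasStrictDerivAt 0 0).hasDerivAt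

theorem adjoint_infinitesimalGenerator (hU0 : U 0 = 1)
    (hUadd : ∀ t s : ℝ, U (t + s) = U t * U s) (hUiso : ∀ (t : ℝ) (x : H), ‖U t x‖ = ‖x‖)
    (hUcont : ∀ x : H, Continuous fun t : ℝ => U t x) :
    (infinitesimalGenerator U).adjoint = -infinitesimalGenerator U := by
  refine le_antisymm ?_ ((isFormalAdjoint_neg_infinitesimalGenerator hU0 hUiso).le_adjoint
    (dense_infinitesimalGenerator_domain hU0 hUadd hUcont))
  have h := le_infinitesimalGenerator U (-(infinitesimalGenerator U).adjoint)
    (hasDerivAt_orbit_of_mem_adjoint hU0 hUadd hUiso hUcont)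
  simpa only [neg_neg] using LinearPMap.neg_le_neg h

end Unitary

/-- **Stone's theorem in a real Hilbert space.**  If `U : ℝ → B(H)` is a strongly
continuous one-parameter group of unitary operators on the real Hilbert space `H`, then
the generator `A`, defined on
`D(A) = {x : lim_{h→0} h⁻¹(U_h x − x) exists}` by `Ax = lim_{h→0} h⁻¹(U_h x − x)`,
is densely defined, anti-selfadjoint, commutes with every `U_t`, generates `U`
(`U_t = e^{tA_ℂ}|_H`, expressed by the derivative property), and is the unique
anti-selfadjoint operator with this property. -/
theorem real_stone_theorem (H : Type*) [NormedAddCommGroup H] [InnerProductSpace ℝ H]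
    [CompleteSpace H] (U : ℝ → H →L[ℝ] H)
    (hU0 : U 0 = 1) (hUadd : ∀ t s : ℝ, U (t + s) = U t * U s)
    (hUiso : ∀ (t : ℝ) (x : H), ‖U t x‖ = ‖x‖)
    (hUcont : ∀ x : H, Continuous fun t : ℝ => U t x) :
    ∃ A : H →ₗ.[ℝ] H,
      (∀ x : H, x ∈ A.domain ↔
        ∃ y : H, Tendsto (fun h : ℝ => h⁻¹ • (U h x - x)) (nhdsWithin 0 {(0 : ℝ)}ᶜ) (nhds y)) ∧
      (∀ x : A.domain, Tendsto (fun h : ℝ => h⁻¹ • (U h (x : H) - (x : H)))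
        (nhdsWithin 0 {(0 : ℝ)}ᶜ) (nhds (A x))) ∧
      Dense (A.domain : Set H) ∧
      IsAntiSelfAdjointPMap A ∧
      (∀ (t : ℝ) (x : H) (hx : x ∈ A.domain),
        ∃ h2 : U t x ∈ A.domain, A ⟨U t x, h2⟩ = U t (A ⟨x, hx⟩)) ∧
      (∀ A' : H →ₗ.[ℝ] H, Dense (A'.domain : Set H) → IsAntiSelfAdjointPMap A' →
        (∀ x : A'.domain, Tendsto (fun h : ℝ => h⁻¹ • (U h (x : H) - (x : H)))
          (nhdsWithin 0 {(0 : ℝ)}ᶜ) (nhds (A' x))) → A' = A) := by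
  have hadj := adjoint_infinitesimalGenerator hU0 hUadd hUiso hUcont
  refine ⟨infinitesimalGenerator U, fun x => ?_,
    fun x => (hasDerivAt_orbit_zero_iff hU0).1 (hasDerivAt_infinitesimalGenerator U x),
    dense_infinitesimalGenerator_domain hU0 hUadd hUcont, isAntiSelfAdjointPMap_iff.2 hadj,
    fun t x hx => exists_infinitesimalGenerator_apply_eq U (hasDerivAt_orbit_map hUadd ⟨x, hx⟩ t),
    fun A' hdense hanti hA' => ?_⟩
  · simp only [← hasDerivAt_orbit_zero_iff hU0]
    exact ⟨fun hx => ⟨_, hx.hasDerivAt⟩, fun ⟨_, hy⟩ => hy.differentiableAt⟩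
  · refine LinearPMap.eq_of_le_of_adjoint_eq_neg hdense (le_infinitesimalGenerator U A' ?_)
      (isAntiSelfAdjointPMap_iff.1 hanti) hadj
    exact fun x => (hasDerivAt_orbit_zero_iff hU0).2 (hA' x)
end

section
/- (Real double commutant theorem) Let H be a real Hilbert space and A a unital *-subalgebra of B(H). Then the following are equivalent: (a) A = A''; (b) A is weakly closed; (c) A is strongly closed. Moreover for any unital *-subalgebra B of B(H), B'' equals the weak closure and the strong closure of B. -/
/-!
For `T ∈ B''` and finitely many vectors `x₁, …, xₙ`, let `M` be the closure in `Hⁿ` of the subspace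
`{(A x₁, …, A xₙ) : A ∈ B}`. It is invariant under the ampliations `A ⊕ ⋯ ⊕ A` of all
`A ∈ B`, and, `B` being `*`-closed, so is `Mᗮ`; hence the orthogonal projection `P` onto `M`
commutes with these ampliations, i.e. the block entries of `P` lie in `B'`. They therefore commute
with `T`, so `P` commutes with the ampliation of `T`, which thus maps `(xᵢ) ∈ M` (as `1 ∈ B`) into
`M`: `T` is a strong limit of elements of `B`. Conversely `B''` is weakly closed and the strong
closure lies in the weak one, so all three sets agree.
-/

variable {H : Type*}

def commutantS [NormedAddCommGroup H] [InnerProductSpace ℝ H]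
    (S : Set (H →L[ℝ] H)) : Set (H →L[ℝ] H) :=
  {T | ∀ A ∈ S, T * A = A * T}

def sotClosure [NormedAddCommGroup H] [InnerProductSpace ℝ H]
    (S : Set (H →L[ℝ] H)) : Set (H →L[ℝ] H) :=
  {T | (⇑T : H → H) ∈ closure ((fun A : H →L[ℝ] H => (⇑A : H → H)) '' S)}

def wotClosure [NormedAddCommGroup H] [InnerProductSpace ℝ H]
    (S : Set (H →L[ℝ] H)) : Set (H →L[ℝ] H) :=
  {T | (fun p : H × H => @inner ℝ H _ p.1 (T p.2)) ∈
    closure ((fun (A : H →L[ℝ] H) (p : H × H) => @inner ℝ H _ p.1 (A p.2)) '' S)}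

open ContinuousLinearMap Module.End Topology

section Ampliation

variable {𝕜 E : Type*} [RCLike 𝕜] [NormedAddCommGroup E] [InnerProductSpace 𝕜 E]

theorem Submodule.commute_starProjection [CompleteSpace E] (U : Submodule 𝕜 E)
    [U.HasOrthogonalProjection] {T : E →L[𝕜] E} (hT : U ∈ invtSubmodule T.toLinearMap)
    (hT' : U ∈ invtSubmodule (adjoint T).toLinearMap) : Commute U.starProjection T := by
  rw [U.isIdempotentElem_starProjection.commute_iff, U.range_starProjection,
    U.ker_starProjection, ← ContinuousLinearMap.mem_invtSubmodule_adjoint_iff]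
  exact ⟨hT, hT'⟩

variable {ι : Type*}

noncomputable def blockEntry [DecidableEq ι]
    (S : PiLp 2 (fun _ : ι => E) →L[𝕜] PiLp 2 (fun _ : ι => E)) (i j : ι) : E →L[𝕜] E :=
  PiLp.proj 2 _ i ∘L S ∘L (PiLp.continuousLinearEquiv 2 𝕜 _).symm.toContinuousLinearMap ∘L
    ContinuousLinearMap.single 𝕜 (fun _ : ι => E) j

theorem blockEntry_apply [DecidableEq ι]
    (S : PiLp 2 (fun _ : ι => E) →L[𝕜] PiLp 2 (fun _ : ι => E)) (i j : ι) (v : E) :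
    blockEntry S i j v = S (PiLp.single 2 j v) i := rfl

theorem apply_eq_sum_blockEntry [Fintype ι] [DecidableEq ι]
    (S : PiLp 2 (fun _ : ι => E) →L[𝕜] PiLp 2 (fun _ : ι => E))
    (y : PiLp 2 (fun _ : ι => E)) (i : ι) : S y i = ∑ j, blockEntry S i j (y j) := by
  have hy : y = ∑ j, PiLp.single 2 j (y j) := by
    ext k
    simp
  conv_lhs => rw [hy]
  simp [blockEntry_apply]

variable [CompleteSpace E]

variable (𝕜 E ι) in
noncomputable def ampliation [Fintype ι] :
    (E →L[𝕜] E) →⋆ₐ[𝕜] (PiLp 2 (fun _ : ι => E) →L[𝕜] PiLp 2 (fun _ : ι => E)) where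
  toFun A := (PiLp.continuousLinearEquiv 2 𝕜 _).symm.toContinuousLinearMap ∘L
    ContinuousLinearMap.pi fun i => A ∘L PiLp.proj 2 _ i
  map_one' := rfl
  map_mul' _ _ := rfl
  map_zero' := rfl
  map_add' _ _ := rfl
  commutes' _ := rfl
  map_star' A := by
    simp only [star_eq_adjoint]
    refine (eq_adjoint_iff _ _).2 fun x y => ?_
    simp [PiLp.inner_apply, adjoint_inner_left]

variable [Fintype ι]

@[simp]
theorem ampliation_apply (A : E →L[𝕜] E) (x : PiLp 2 (fun _ : ι => E)) (i : ι) :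
    ampliation 𝕜 E ι A x i = A (x i) := rfl

theorem ampliation_single [DecidableEq ι] (A : E →L[𝕜] E) (j : ι) (v : E) :
    ampliation 𝕜 E ι A (PiLp.single 2 j v) = PiLp.single 2 j (A v) := by
  ext k
  simp only [ampliation_apply, PiLp.single_apply]
  split_ifs <;> simp

theorem commute_ampliation_iff [DecidableEq ι]
    {S : PiLp 2 (fun _ : ι => E) →L[𝕜] PiLp 2 (fun _ : ι => E)} {T : E →L[𝕜] E} :
    Commute S (ampliation 𝕜 E ι T) ↔ ∀ i j, Commute (blockEntry S i j) T := by
  constructor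
  · intro h i j
    ext v
    simpa [blockEntry_apply, ← ampliation_single] using congr($(h.eq) (PiLp.single 2 j v) i)
  · intro h
    ext y i
    rw [mul_apply_eq_comp, mul_apply_eq_comp, ampliation_apply, apply_eq_sum_blockEntry,
      apply_eq_sum_blockEntry, map_sum]
    exact Finset.sum_congr rfl fun j _ => congr($((h i j).eq) (y j))

theorem ampliation_apply_mem_closure_orbit (B : StarSubalgebra 𝕜 (E →L[𝕜] E)) {T : E →L[𝕜] E}
    (hT : T ∈ Set.centralizer (Set.centralizer (B : Set (E →L[𝕜] E))))
    (x : PiLp 2 (fun _ : ι => E)) :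
    ampliation 𝕜 E ι T x ∈ closure ((fun A => ampliation 𝕜 E ι A x) '' B) := by
  classical
  let orbit : Submodule 𝕜 (PiLp 2 (fun _ : ι => E)) :=
    B.toSubalgebra.toSubmodule.map
      ((ContinuousLinearMap.apply 𝕜 _ x).toLinearMap ∘ₗ (ampliation 𝕜 E ι).toLinearMap)
  let M := orbit.topologicalClosure
  have hM : (M : Set (PiLp 2 (fun _ : ι => E))) = closure ((fun A => ampliation 𝕜 E ι A x) '' B) :=
    orbit.topologicalClosure_coe
  have : CompleteSpace M := orbit.isClosed_topologicalClosure.completeSpace_coe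
  have hinv : ∀ A ∈ B, M ∈ invtSubmodule (ampliation 𝕜 E ι A).toLinearMap := by
    intro A hA
    have horbit : Set.MapsTo (ampliation 𝕜 E ι A) ((fun A => ampliation 𝕜 E ι A x) '' B)
        ((fun A => ampliation 𝕜 E ι A x) '' B) := by
      rintro _ ⟨A', hA', rfl⟩
      exact ⟨A * A', mul_mem hA hA', by simp [mul_apply_eq_comp]⟩
    rw [mem_invtSubmodule_iff_mapsTo, hM]
    exact horbit.closure (ampliation 𝕜 E ι A).continuous
  have hPB : ∀ A ∈ B, Commute M.starProjection (ampliation 𝕜 E ι A) := fun A hA =>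
    M.commute_starProjection (hinv A hA)
      (by rw [← star_eq_adjoint, ← map_star]; exact hinv _ (star_mem hA))
  have hPT : Commute M.starProjection (ampliation 𝕜 E ι T) :=
    commute_ampliation_iff.2 fun i j =>
      hT _ fun A hA => (commute_ampliation_iff.1 (hPB A hA) i j).eq.symm
  have hx : x ∈ M := orbit.le_topologicalClosure ⟨1, one_mem B, by simp⟩
  rw [← hM, ← M.starProjection_eq_self_iff.2 hx, ← mul_apply_eq_comp, ← hPT.eq,
    mul_apply_eq_comp]
  exact M.starProjection_apply_mem _

end Ampliation

section Closures

variable [NormedAddCommGroup H] [InnerProductSpace ℝ H]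

theorem commutantS_eq_centralizer (S : Set (H →L[ℝ] H)) : commutantS S = Set.centralizer S := by
  ext T
  simp only [commutantS, Set.mem_ofPred_eq, Set.mem_centralizer_iff, eq_comm]

theorem sotClosure_subset_wotClosure (S : Set (H →L[ℝ] H)) : sotClosure S ⊆ wotClosure S := by
  intro T hT
  have hcont : Continuous (fun (g : H → H) (p : H × H) => @inner ℝ H _ p.1 (g p.2)) :=
    continuous_pi fun p => continuous_const.inner (continuous_apply p.2)
  have := image_closure_subset_closure_image hcont ⟨_, hT, rfl⟩
  rwa [Set.image_image] at this

variable [CompleteSpace H]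

theorem wotClosure_subset_commutantS_commutantS (S : Set (H →L[ℝ] H)) :
    wotClosure S ⊆ commutantS (commutantS S) := by
  intro T hT C hC
  ext v
  refine ext_inner_left ℝ fun u => ?_
  have hclosed : IsClosed {f : H × H → ℝ | f (adjoint C u, v) = f (u, C v)} :=
    isClosed_eq (continuous_apply _) (continuous_apply _)
  have hS : (fun (A : H →L[ℝ] H) (p : H × H) => @inner ℝ H _ p.1 (A p.2)) '' S ⊆
      {f : H × H → ℝ | f (adjoint C u, v) = f (u, C v)} := by
    rintro _ ⟨A, hA, rfl⟩
    simp only [Set.mem_ofPred_eq, adjoint_inner_left, ← mul_apply_eq_comp, (hC A hA).symm]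
  have hT' : @inner ℝ H _ (adjoint C u) (T v) = @inner ℝ H _ u (T (C v)) :=
    hclosed.closure_subset_iff.2 hS hT
  rw [mul_apply_eq_comp, mul_apply_eq_comp, ← hT', adjoint_inner_left]

theorem commutantS_commutantS_subset_sotClosure (B : StarSubalgebra ℝ (H →L[ℝ] H)) :
    commutantS (commutantS (B : Set (H →L[ℝ] H))) ⊆ sotClosure (B : Set (H →L[ℝ] H)) := by
  intro T hT
  rw [commutantS_eq_centralizer, commutantS_eq_centralizer] at hT
  refine mem_closure_iff_nhds.2 fun o ho => ?_
  rw [nhds_pi, Filter.mem_pi'] at ho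
  obtain ⟨I, t, ht, hIt⟩ := ho
  let x : PiLp 2 (fun _ : I => H) := WithLp.toLp 2 fun a : I => (a : H)
  have hV : {y : PiLp 2 (fun _ : I => H) | ∀ a : I, y a ∈ t a} ∈ 𝓝 (ampliation ℝ H I T x) :=
    Filter.eventually_all.2 fun a =>
      (PiLp.continuous_apply 2 (fun _ : I => H) a).continuousAt (ht a)
  obtain ⟨_, hy, A, hA, rfl⟩ :=
    mem_closure_iff_nhds.1 (ampliation_apply_mem_closure_orbit B hT x) _ hV
  exact ⟨A, hIt fun a ha => hy ⟨a, ha⟩, A, hA, rfl⟩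

theorem commutantS_commutantS_eq_sotClosure (B : StarSubalgebra ℝ (H →L[ℝ] H)) :
    commutantS (commutantS (B : Set (H →L[ℝ] H))) = sotClosure (B : Set (H →L[ℝ] H)) :=
  (commutantS_commutantS_subset_sotClosure B).antisymm
    ((sotClosure_subset_wotClosure _).trans (wotClosure_subset_commutantS_commutantS _))

theorem commutantS_commutantS_eq_wotClosure (B : StarSubalgebra ℝ (H →L[ℝ] H)) :
    commutantS (commutantS (B : Set (H →L[ℝ] H))) = wotClosure (B : Set (H →L[ℝ] H)) :=
  ((commutantS_commutantS_subset_sotClosure B).trans (sotClosure_subset_wotClosure _)).antisymm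
    (wotClosure_subset_commutantS_commutantS _)

end Closures

/-- **Von Neumann's double commutant theorem in a real Hilbert space.**  For a unital
*-subalgebra `A` of `B(H)` the following are equivalent: `A = A''`, `A` is weakly
closed, `A` is strongly closed.  Moreover, for any unital *-subalgebra `B` of `B(H)`,
`B''` equals the weak closure and the strong closure of `B`. -/
theorem real_double_commutant_theorem [NormedAddCommGroup H] [InnerProductSpace ℝ H]
    [CompleteSpace H] (A : StarSubalgebra ℝ (H →L[ℝ] H)) :
    ((commutantS (commutantS (A : Set (H →L[ℝ] H))) = (A : Set (H →L[ℝ] H)) ↔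
        wotClosure (A : Set (H →L[ℝ] H)) = (A : Set (H →L[ℝ] H))) ∧
      (wotClosure (A : Set (H →L[ℝ] H)) = (A : Set (H →L[ℝ] H)) ↔
        sotClosure (A : Set (H →L[ℝ] H)) = (A : Set (H →L[ℝ] H)))) ∧
    ∀ B : StarSubalgebra ℝ (H →L[ℝ] H),
      commutantS (commutantS (B : Set (H →L[ℝ] H))) = wotClosure (B : Set (H →L[ℝ] H)) ∧
      commutantS (commutantS (B : Set (H →L[ℝ] H))) = sotClosure (B : Set (H →L[ℝ] H)) := by
  refine ⟨⟨?_, ?_⟩, fun B =>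
    ⟨commutantS_commutantS_eq_wotClosure B, commutantS_commutantS_eq_sotClosure B⟩⟩
  · rw [commutantS_commutantS_eq_wotClosure]
  · rw [← commutantS_commutantS_eq_wotClosure, commutantS_commutantS_eq_sotClosure]
end
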